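/- Let n be a positive integer and G a subgroup of S_n acting on ℕ^n on positions. If a nonzero integer vector v of length n is canonical under G, then its father in the generation tree is also canonical under G. Consequently the canonical vectors form a prefix tree: every iterated father of a canonical vector is canonical, down to the root (0,…,0). -/

import Mathlib

/-!
Write `v = v' + e_ℓ` with `v' = father v` and `ℓ` the last nonzero position, so that
`σ·v = σ·v' + e_{σ ℓ}`. If `v' <lex σ·v'`, let `j` be the first position where they differ.
The two vectors have the same total and agree before `j`, while `v'` vanishes beyond `ℓ`; so if
`j ≥ ℓ` the entry of `σ·v'` at `j` could not exceed that of `v'`. Hence `j < ℓ`, and adding `e_ℓ`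
does not touch positions up to `j`: `v <lex σ·v' ≤lex σ·v`, contradicting canonicity of `v`.
-/

variable {n : ℕ}

/-- Action of a permutation on integer vectors, on positions: `(σ·v)_i = v_{σ⁻¹(i)}`. -/
def act (σ : Equiv.Perm (Fin n)) (v : Fin n → ℕ) : Fin n → ℕ := fun i => v (σ⁻¹ i)

/-- `v` is canonical under `G` if it is the lexicographically greatest element of its orbit. -/
def IsCanonical (G : Subgroup (Equiv.Perm (Fin n))) (v : Fin n → ℕ) : Prop :=
  ∀ σ ∈ G, toLex (act σ v) ≤ toLex v

/-- Position of the last nonzero entry of `v` (position `0` if `v = 0`). -/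
def lastNZ [NeZero n] (v : Fin n → ℕ) : Fin n :=
  if h : v = 0 then 0
  else ((Finset.univ : Finset (Fin n)).filter fun i => v i ≠ 0).max'
    (by obtain ⟨i, hi⟩ := Function.ne_iff.mp h
        exact ⟨i, Finset.mem_filter.mpr ⟨Finset.mem_univ i, hi⟩⟩)

/-- The father of a vector: decrement its last nonzero entry (fixes the zero vector). -/
def father [NeZero n] (v : Fin n → ℕ) : Fin n → ℕ :=
  Function.update v (lastNZ v) (v (lastNZ v) - 1)

/-- The children of a vector: increment the last nonzero entry, or set a later entry to 1. -/
def children [NeZero n] (v : Fin n → ℕ) : Set (Fin n → ℕ) :=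
  insert (Function.update v (lastNZ v) (v (lastNZ v) + 1))
    {w | ∃ j : Fin n, lastNZ v < j ∧ w = Function.update v j 1}

open Finset

section LexSum

variable {ι : Type*} [LinearOrder ι] [Fintype ι]

theorem apply_le_apply_of_sum_eq {x y : ι → ℕ} {j : ι} (hsum : ∑ i, y i = ∑ i, x i)
    (hagree : ∀ i < j, x i = y i) (hx : ∀ i, j < i → x i = 0) : y j ≤ x j := by
  have hj : j ∈ univ.filter (fun i => ¬ i < j) := by simp
  have hx_tail : ∑ i ∈ univ.filter (fun i => ¬ i < j), x i = x j :=
    sum_eq_single_of_mem j hj fun i hi hij =>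
      hx i (lt_of_le_of_ne (not_lt.mp (mem_filter.mp hi).2) (Ne.symm hij))
  have hy_tail : y j ≤ ∑ i ∈ univ.filter (fun i => ¬ i < j), y i :=
    single_le_sum (fun _ _ => Nat.zero_le _) hj
  have hhead : ∑ i ∈ univ.filter (· < j), y i = ∑ i ∈ univ.filter (· < j), x i :=
    sum_congr rfl fun i hi => (hagree i (mem_filter.mp hi).2).symm
  have hy := sum_filter_add_sum_filter_not univ (· < j) y
  have hx' := sum_filter_add_sum_filter_not univ (· < j) x
  omega

theorem toLex_le_of_toLex_add_single_le {x y : ι → ℕ} {ℓ s : ι}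
    (hsum : ∑ i, y i = ∑ i, x i) (hx : ∀ i, ℓ < i → x i = 0)
    (h : toLex (y + Pi.single s 1) ≤ toLex (x + Pi.single ℓ 1)) : toLex y ≤ toLex x := by
  by_contra hlt
  obtain ⟨j, hagree, hj⟩ : ∃ j, (∀ i < j, x i = y i) ∧ x j < y j := not_le.mp hlt
  have hjℓ : j < ℓ := by
    by_contra! hℓj
    exact (apply_le_apply_of_sum_eq hsum hagree fun i hi => hx i (hℓj.trans_lt hi)).not_gt hj
  have hxy : toLex (x + Pi.single ℓ 1) < toLex y :=
    ⟨j, fun i hi => by simp [hagree i hi, (hi.trans hjℓ).ne],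
      by simpa [hjℓ.ne] using hj⟩
  exact (hxy.trans_le (Pi.toLex_monotone le_self_add)).not_ge h

end LexSum

section Canonical

theorem act_add (σ : Equiv.Perm (Fin n)) (x y : Fin n → ℕ) :
    act σ (x + y) = act σ x + act σ y :=
  rfl

theorem act_single (σ : Equiv.Perm (Fin n)) (i : Fin n) (a : ℕ) :
    act σ (Pi.single i a) = Pi.single (σ i) a := by
  funext k
  simp only [act, Pi.single_apply, Equiv.Perm.inv_eq_iff_eq]

theorem sum_act (σ : Equiv.Perm (Fin n)) (v : Fin n → ℕ) : ∑ i, act σ v i = ∑ i, v i :=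
  Equiv.sum_comp σ⁻¹ v

variable [NeZero n]

theorem apply_lastNZ_ne_zero {v : Fin n → ℕ} (hv : v ≠ 0) : v (lastNZ v) ≠ 0 := by
  rw [lastNZ, dif_neg hv]
  exact (mem_filter.mp (max'_mem (univ.filter fun i => v i ≠ 0) _)).2

theorem apply_eq_zero_of_lastNZ_lt {v : Fin n → ℕ} {i : Fin n} (hi : lastNZ v < i) :
    v i = 0 := by
  by_cases hv : v = 0
  · simp [hv]
  by_contra hne
  rw [lastNZ, dif_neg hv] at hi
  exact hi.not_ge (le_max' _ i (mem_filter.mpr ⟨mem_univ i, hne⟩))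

theorem father_zero : father (0 : Fin n → ℕ) = 0 := by
  simp [father]

theorem father_apply_eq_zero_of_lastNZ_lt {v : Fin n → ℕ} {i : Fin n} (hi : lastNZ v < i) :
    father v i = 0 := by
  rw [father, Function.update_of_ne hi.ne']
  exact apply_eq_zero_of_lastNZ_lt hi

theorem father_add_single {v : Fin n → ℕ} (hv : v ≠ 0) :
    father v + Pi.single (lastNZ v) 1 = v := by
  have hℓ := apply_lastNZ_ne_zero hv
  funext i
  by_cases hi : i = lastNZ v
  · subst hi
    simp only [father, Pi.add_apply, Function.update_self, Pi.single_eq_same]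
    omega
  · simp [father, hi]

theorem isCanonical_father {G : Subgroup (Equiv.Perm (Fin n))} {v : Fin n → ℕ}
    (h : IsCanonical G v) : IsCanonical G (father v) := by
  by_cases hv : v = 0
  · subst hv
    rwa [father_zero]
  intro σ hσ
  refine toLex_le_of_toLex_add_single_le (s := σ (lastNZ v)) (sum_act σ _)
    (fun i hi => father_apply_eq_zero_of_lastNZ_lt hi) ?_
  rw [← act_single, ← act_add, father_add_single hv]
  exact h σ hσ

theorem isCanonical_iterate_father {G : Subgroup (Equiv.Perm (Fin n))} {v : Fin n → ℕ}
    (h : IsCanonical G v) (k : ℕ) : IsCanonical G (father^[k] v) :=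
  Function.Iterate.rec (IsCanonical G) h (fun _ => isCanonical_father) k

end Canonical

theorem stmt1_general (n : ℕ) [NeZero n] (G : Subgroup (Equiv.Perm (Fin n)))
    (v : Fin n → ℕ) (h : IsCanonical G v) :
    IsCanonical G (father v) ∧ ∀ k : ℕ, IsCanonical G (father^[k] v) :=
  ⟨isCanonical_father h, isCanonical_iterate_father h⟩

/-- If a nonzero vector `v` is canonical under `G` then its father is canonical;
consequently every iterated father of a canonical vector (down to the root `0`)
is canonical. -/
theorem stmt1 (n : ℕ) [NeZero n] (G : Subgroup (Equiv.Perm (Fin n)))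
    (v : Fin n → ℕ) (hv : v ≠ 0) (h : IsCanonical G v) :
    IsCanonical G (father v) ∧ ∀ k : ℕ, IsCanonical G (father^[k] v) :=
  stmt1_general n G v h
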